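/- Affine equivariance of the SNSS.sd functional (Proposition 1(2)). Let p ≥ 1, let A and B be invertible real p×p matrices, let D₁ be a diagonal p×p matrix with strictly positive diagonal entries, let D₂ be a diagonal p×p matrix, and assume the p ratios (D₂)ᵢᵢ/(D₁)ᵢᵢ are pairwise distinct. Set M₁ = A D₁ Aᵀ and M₂ = A D₂ Aᵀ. Suppose W satisfies W M₁ Wᵀ = I and W M₂ Wᵀ diagonal, and W* satisfies W* (B M₁ Bᵀ) W*ᵀ = I and W* (B M₂ Bᵀ) W*ᵀ diagonal. Then there exists a signed permutation matrix Q such that W* = Q W B⁻¹. -/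

import Mathlib

open Matrix

/-- A signed permutation matrix: exactly one nonzero entry in each row and each
column, each such entry being `1` or `-1`. -/
def IsSignedPerm {p : ℕ} (Q : Matrix (Fin p) (Fin p) ℝ) : Prop :=
  (∀ i, ∃! j, Q i j ≠ 0) ∧ (∀ j, ∃! i, Q i j ≠ 0) ∧
  (∀ i j, Q i j ≠ 0 → Q i j = 1 ∨ Q i j = -1)

/-- A generalized permutation matrix: exactly one nonzero entry in each row and
each column. -/
def IsGenPerm {p : ℕ} (Q : Matrix (Fin p) (Fin p) ℝ) : Prop :=
  (∀ i, ∃! j, Q i j ≠ 0) ∧ (∀ j, ∃! i, Q i j ≠ 0)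

open scoped Classical in
/-- For a symmetric positive (semi)definite matrix `M`, `invSqrt M` is the inverse
of its unique positive semidefinite square root, i.e. `M^{-1/2}`. -/
noncomputable def invSqrt {p : ℕ} (M : Matrix (Fin p) (Fin p) ℝ) : Matrix (Fin p) (Fin p) ℝ :=
  if h : M.PosSemidef then (h.1.eigenvectorUnitary.1 * diagonal ((RCLike.ofReal : ℝ → ℝ) ∘ Real.sqrt ∘ h.1.eigenvalues) *
    (star h.1.eigenvectorUnitary : Matrix (Fin p) (Fin p) ℝ))⁻¹ else 0

/-- Entry formula: multiplying a diagonal matrix on the left. -/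
lemma mul_apply_of_isDiag_left {p : ℕ} {Λ C : Matrix (Fin p) (Fin p) ℝ}
    (hΛ : Λ.IsDiag) (i j : Fin p) : (Λ * C) i j = Λ i i * C i j := by
  rw [Matrix.mul_apply]
  rw [Finset.sum_eq_single i]
  · intro b _ hb
    rw [hΛ (Ne.symm hb), zero_mul]
  · intro h; exact absurd (Finset.mem_univ i) h

/-- Entry formula: multiplying a diagonal matrix on the right. -/
lemma mul_apply_of_isDiag_right {p : ℕ} {Λ C : Matrix (Fin p) (Fin p) ℝ}
    (hΛ : Λ.IsDiag) (i j : Fin p) : (C * Λ) i j = C i j * Λ j j := by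
  rw [Matrix.mul_apply]
  rw [Finset.sum_eq_single j]
  · intro b _ hb
    rw [hΛ hb, mul_zero]
  · intro h; exact absurd (Finset.mem_univ j) h

/-- Rows of a matrix with `C * Cᵀ = 1` are nonzero. -/
lemma row_ne_zero_of_orth {p : ℕ} {C : Matrix (Fin p) (Fin p) ℝ}
    (hC : C * Cᵀ = 1) (i : Fin p) : ∃ j, C i j ≠ 0 := by
  by_contra h
  push_neg at h
  have h1 : (C * Cᵀ) i i = 1 := by rw [hC, Matrix.one_apply_eq]
  rw [Matrix.mul_apply] at h1
  simp only [Matrix.transpose_apply] at h1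
  rw [Finset.sum_eq_zero (fun j _ => by rw [h j, zero_mul])] at h1
  exact zero_ne_one h1

/-- If `Λ = C R Cᵀ` with `C` orthogonal, `R` diagonal with distinct diagonal
entries and `Λ` diagonal, then `Λ` has distinct diagonal entries. -/
lemma diag_distinct_of_conj {p : ℕ} {C R Λ : Matrix (Fin p) (Fin p) ℝ}
    (hC : C * Cᵀ = 1) (hR : R.IsDiag) (hΛ : Λ.IsDiag)
    (hRd : ∀ i j, i ≠ j → R i i ≠ R j j)
    (hconj : Λ = C * R * Cᵀ) :
    ∀ i j, i ≠ j → Λ i i ≠ Λ j j := by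
  have hCtC : Cᵀ * C = 1 := mul_eq_one_comm.mp hC
  have hLC : Λ * C = C * R := by
    calc Λ * C = C * R * Cᵀ * C := by rw [hconj]
      _ = C * R * (Cᵀ * C) := by rw [Matrix.mul_assoc]
      _ = C * R := by rw [hCtC, Matrix.mul_one]
  have key : ∀ i j, C i j ≠ 0 → Λ i i = R j j := by
    intro i j hij
    have h1 : (Λ * C) i j = (C * R) i j := by rw [hLC]
    rw [mul_apply_of_isDiag_left hΛ, mul_apply_of_isDiag_right hR] at h1
    rw [mul_comm (C i j) (R j j)] at h1
    exact mul_right_cancel₀ hij h1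
  -- each row of C is supported on a single column
  have supp : ∀ i j k, C i j ≠ 0 → C i k ≠ 0 → j = k := by
    intro i j k hj hk
    by_contra hne
    exact hRd j k hne ((key i j hj).symm.trans (key i k hk))
  intro i i' hne heq
  obtain ⟨j, hj⟩ := row_ne_zero_of_orth hC i
  obtain ⟨j', hj'⟩ := row_ne_zero_of_orth hC i'
  have hjj' : j = j' := by
    by_contra h
    exact hRd j j' h (((key i j hj).symm.trans heq).trans (key i' j' hj'))
  subst hjj'
  have h0 : (C * Cᵀ) i i' = 0 := by rw [hC, Matrix.one_apply_ne hne]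
  rw [Matrix.mul_apply] at h0
  simp only [Matrix.transpose_apply] at h0
  rw [Finset.sum_eq_single j (fun b _ hb => by
    rcases eq_or_ne (C i b) 0 with h | h
    · rw [h, zero_mul]
    · exact absurd (supp i b j h hj) hb)
    (fun h => absurd (Finset.mem_univ j) h)] at h0
  exact (mul_ne_zero hj hj') h0

/-- An orthogonal matrix conjugating a diagonal matrix with distinct entries to
a diagonal matrix is a signed permutation matrix. -/
lemma isSignedPerm_of_conj {p : ℕ} {Q Λ Λs : Matrix (Fin p) (Fin p) ℝ}
    (hQ : Q * Qᵀ = 1) (hΛ : Λ.IsDiag) (hΛd : ∀ i j, i ≠ j → Λ i i ≠ Λ j j)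
    (hΛs : Λs.IsDiag) (hint : Q * Λ * Qᵀ = Λs) : IsSignedPerm Q := by
  have hQtQ : Qᵀ * Q = 1 := mul_eq_one_comm.mp hQ
  have hQL : Q * Λ = Λs * Q := by
    calc Q * Λ = Q * Λ * (Qᵀ * Q) := by rw [hQtQ, Matrix.mul_one]
      _ = (Q * Λ * Qᵀ) * Q := by simp only [Matrix.mul_assoc]
      _ = Λs * Q := by rw [hint]
  have key : ∀ i j, Q i j ≠ 0 → Λ j j = Λs i i := by
    intro i j hij
    have h1 : (Q * Λ) i j = (Λs * Q) i j := by rw [hQL]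
    rw [mul_apply_of_isDiag_right hΛ, mul_apply_of_isDiag_left hΛs] at h1
    rw [mul_comm (Λs i i) (Q i j)] at h1
    exact mul_left_cancel₀ hij h1
  have supp : ∀ i j k, Q i j ≠ 0 → Q i k ≠ 0 → j = k := by
    intro i j k hj hk
    by_contra hne
    exact hΛd j k hne ((key i j hj).trans (key i k hk).symm)
  have rowEx : ∀ i, ∃ j, Q i j ≠ 0 := row_ne_zero_of_orth hQ
  refine ⟨fun i => ?_, fun j => ?_, fun i j hij => ?_⟩
  · obtain ⟨j, hj⟩ := rowEx i
    exact ⟨j, hj, fun k hk => supp i k j hk hj⟩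
  · -- column: existence and uniqueness
    have hcolEx : ∃ i, Q i j ≠ 0 := by
      by_contra h
      push_neg at h
      have h1 : (Qᵀ * Q) j j = 1 := by rw [hQtQ, Matrix.one_apply_eq]
      rw [Matrix.mul_apply] at h1
      simp only [Matrix.transpose_apply] at h1
      rw [Finset.sum_eq_zero (fun i _ => by rw [h i, mul_zero])] at h1
      exact zero_ne_one h1
    obtain ⟨i, hi⟩ := hcolEx
    refine ⟨i, hi, fun i' hi' => ?_⟩
    by_contra hne
    have h0 : (Q * Qᵀ) i' i = 0 := by rw [hQ, Matrix.one_apply_ne hne]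
    rw [Matrix.mul_apply] at h0
    simp only [Matrix.transpose_apply] at h0
    rw [Finset.sum_eq_single j (fun b _ hb => by
      rcases eq_or_ne (Q i' b) 0 with h | h
      · rw [h, zero_mul]
      · exact absurd (supp i' b j h hi') hb)
      (fun h => absurd (Finset.mem_univ j) h)] at h0
    exact (mul_ne_zero hi' hi) h0
  · -- entries are ±1
    have h1 : (Q * Qᵀ) i i = 1 := by rw [hQ, Matrix.one_apply_eq]
    rw [Matrix.mul_apply] at h1
    simp only [Matrix.transpose_apply] at h1
    rw [Finset.sum_eq_single j (fun b _ hb => by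
      rcases eq_or_ne (Q i b) 0 with h | h
      · rw [h, zero_mul]
      · exact absurd (supp i b j h hij) hb)
      (fun h => absurd (Finset.mem_univ j) h)] at h1
    exact mul_self_eq_one_iff.mp h1

/-- Affine equivariance of the SNSS.sd functional. -/
theorem snss_sd_affine_equivariant {p : ℕ} (hp : 1 ≤ p)
    (A B D₁ D₂ W Wstar : Matrix (Fin p) (Fin p) ℝ)
    (hA : IsUnit A) (hB : IsUnit B)
    (hD₁ : D₁.IsDiag) (hD₁pos : ∀ i, 0 < D₁ i i)
    (hD₂ : D₂.IsDiag)
    (hdist : ∀ i j, i ≠ j → D₂ i i / D₁ i i ≠ D₂ j j / D₁ j j)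
    (hW1 : W * (A * D₁ * Aᵀ) * Wᵀ = 1)
    (hW2 : (W * (A * D₂ * Aᵀ) * Wᵀ).IsDiag)
    (hWs1 : Wstar * (B * (A * D₁ * Aᵀ) * Bᵀ) * Wstarᵀ = 1)
    (hWs2 : (Wstar * (B * (A * D₂ * Aᵀ) * Bᵀ) * Wstarᵀ).IsDiag) :
    ∃ Q : Matrix (Fin p) (Fin p) ℝ, IsSignedPerm Q ∧ Wstar = Q * W * B⁻¹ := by
  classical
  -- invertibility of W and B
  have hWunit : IsUnit W := by
    have h : W * ((A * D₁ * Aᵀ) * Wᵀ) = 1 := by rw [← Matrix.mul_assoc]; exact hW1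
    exact ⟨⟨W, (A * D₁ * Aᵀ) * Wᵀ, h, mul_eq_one_comm.mp h⟩, rfl⟩
  have hWdet : IsUnit W.det := (Matrix.isUnit_iff_isUnit_det W).mp hWunit
  have hBdet : IsUnit B.det := (Matrix.isUnit_iff_isUnit_det B).mp hB
  have hWinv : W⁻¹ * W = 1 := Matrix.nonsing_inv_mul W hWdet
  have hWinv' : W * W⁻¹ = 1 := Matrix.mul_nonsing_inv W hWdet
  have hWtdet : IsUnit Wᵀ.det := by rwa [Matrix.det_transpose]
  have hWtinv : Wᵀ * (Wᵀ)⁻¹ = 1 := Matrix.mul_nonsing_inv Wᵀ hWtdet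
  have hBinv : B * B⁻¹ = 1 := Matrix.mul_nonsing_inv B hBdet
  have htinv : (W⁻¹)ᵀ = (Wᵀ)⁻¹ := Matrix.transpose_nonsing_inv W
  -- the conjugation identity for any X
  have conj : ∀ X : Matrix (Fin p) (Fin p) ℝ,
      W⁻¹ * (W * X * Wᵀ) * (W⁻¹)ᵀ = X := by
    intro X
    rw [htinv]
    calc W⁻¹ * (W * X * Wᵀ) * (Wᵀ)⁻¹
        = (W⁻¹ * W) * X * (Wᵀ * (Wᵀ)⁻¹) := by
          simp only [Matrix.mul_assoc]
      _ = X := by rw [hWinv, hWtinv, Matrix.one_mul, Matrix.mul_one]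
  have hM₁ : W⁻¹ * (W⁻¹)ᵀ = A * D₁ * Aᵀ := by
    have := conj (A * D₁ * Aᵀ)
    rw [hW1] at this
    rwa [Matrix.mul_one] at this
  set Λ : Matrix (Fin p) (Fin p) ℝ := W * (A * D₂ * Aᵀ) * Wᵀ with hΛdef
  have hM₂ : W⁻¹ * Λ * (W⁻¹)ᵀ = A * D₂ * Aᵀ := conj (A * D₂ * Aᵀ)
  -- define Q
  set Q : Matrix (Fin p) (Fin p) ℝ := Wstar * B * W⁻¹ with hQdef
  have hQt : Qᵀ = (W⁻¹)ᵀ * (Bᵀ * Wstarᵀ) := by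
    rw [hQdef, Matrix.transpose_mul, Matrix.transpose_mul]
  -- Q is orthogonal
  have hQQt : Q * Qᵀ = 1 := by
    calc Q * Qᵀ = Wstar * B * W⁻¹ * ((W⁻¹)ᵀ * (Bᵀ * Wstarᵀ)) := by rw [hQt]
      _ = Wstar * (B * (W⁻¹ * (W⁻¹)ᵀ) * Bᵀ) * Wstarᵀ := by
          simp only [Matrix.mul_assoc]
      _ = Wstar * (B * (A * D₁ * Aᵀ) * Bᵀ) * Wstarᵀ := by rw [hM₁]
      _ = 1 := hWs1
  -- Q conjugates Λ to Λs
  set Λs : Matrix (Fin p) (Fin p) ℝ := Wstar * (B * (A * D₂ * Aᵀ) * Bᵀ) * Wstarᵀ with hΛsdef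
  have hint : Q * Λ * Qᵀ = Λs := by
    calc Q * Λ * Qᵀ
        = Wstar * B * W⁻¹ * Λ * ((W⁻¹)ᵀ * (Bᵀ * Wstarᵀ)) := by rw [hQt]
      _ = Wstar * (B * (W⁻¹ * (Λ * (W⁻¹)ᵀ)) * Bᵀ) * Wstarᵀ := by
          simp only [Matrix.mul_assoc]
      _ = Wstar * (B * (A * D₂ * Aᵀ) * Bᵀ) * Wstarᵀ := by
          rw [← Matrix.mul_assoc W⁻¹ Λ, hM₂]
      _ = Λs := rfl
  -- Λ has distinct diagonal entries
  set S : Matrix (Fin p) (Fin p) ℝ := Matrix.diagonal (fun i => Real.sqrt (D₁ i i)) with hSdef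
  set R : Matrix (Fin p) (Fin p) ℝ := Matrix.diagonal (fun i => D₂ i i / D₁ i i) with hRdef
  set C : Matrix (Fin p) (Fin p) ℝ := W * A * S with hCdef
  have hSS : S * S = D₁ := by
    rw [hSdef, Matrix.diagonal_mul_diagonal]
    have h : (fun i => Real.sqrt (D₁ i i) * Real.sqrt (D₁ i i))
        = fun i => D₁ i i := by
      funext i
      exact Real.mul_self_sqrt (hD₁pos i).le
    rw [h]
    exact hD₁.diagonal_diag
  have hSRS : S * R * S = D₂ := by
    rw [hSdef, hRdef, Matrix.diagonal_mul_diagonal, Matrix.diagonal_mul_diagonal]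
    have h : (fun i => Real.sqrt (D₁ i i) * (D₂ i i / D₁ i i) * Real.sqrt (D₁ i i))
        = fun i => D₂ i i := by
      funext i
      have h0 : D₁ i i ≠ 0 := (hD₁pos i).ne'
      have hs : Real.sqrt (D₁ i i) * Real.sqrt (D₁ i i) = D₁ i i :=
        Real.mul_self_sqrt (hD₁pos i).le
      calc Real.sqrt (D₁ i i) * (D₂ i i / D₁ i i) * Real.sqrt (D₁ i i)
          = D₂ i i / D₁ i i * (Real.sqrt (D₁ i i) * Real.sqrt (D₁ i i)) := by ring
        _ = D₂ i i / D₁ i i * D₁ i i := by rw [hs]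
        _ = D₂ i i := div_mul_cancel₀ _ h0
    rw [h]
    exact hD₂.diagonal_diag
  have hSt : Sᵀ = S := Matrix.diagonal_transpose _
  have hCt : Cᵀ = S * (Aᵀ * Wᵀ) := by
    rw [hCdef, Matrix.transpose_mul, Matrix.transpose_mul, hSt]
  have hCCt : C * Cᵀ = 1 := by
    calc C * Cᵀ = W * A * S * (S * (Aᵀ * Wᵀ)) := by rw [hCt]
      _ = W * (A * (S * S) * Aᵀ) * Wᵀ := by simp only [Matrix.mul_assoc]
      _ = W * (A * D₁ * Aᵀ) * Wᵀ := by rw [hSS]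
      _ = 1 := hW1
  have hconj : Λ = C * R * Cᵀ := by
    calc Λ = W * (A * D₂ * Aᵀ) * Wᵀ := rfl
      _ = W * (A * (S * R * S) * Aᵀ) * Wᵀ := by rw [hSRS]
      _ = W * A * S * R * (S * (Aᵀ * Wᵀ)) := by simp only [Matrix.mul_assoc]
      _ = C * R * Cᵀ := by rw [hCt, hCdef]
  have hRdiag : R.IsDiag := Matrix.isDiag_diagonal _
  have hRd : ∀ i j, i ≠ j → R i i ≠ R j j := by
    intro i j hne
    rw [hRdef]
    simpa using hdist i j hne
  have hΛd : ∀ i j, i ≠ j → Λ i i ≠ Λ j j :=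
    diag_distinct_of_conj hCCt hRdiag hW2 hRd hconj
  -- Q is a signed permutation
  have hQsp : IsSignedPerm Q := isSignedPerm_of_conj hQQt hW2 hΛd hWs2 hint
  refine ⟨Q, hQsp, ?_⟩
  calc Wstar = Wstar * (B * B⁻¹) := by rw [hBinv, Matrix.mul_one]
    _ = Wstar * B * (W⁻¹ * W) * B⁻¹ := by rw [hWinv]; simp only [Matrix.mul_assoc, Matrix.mul_one]
    _ = Q * W * B⁻¹ := by rw [hQdef]; simp only [Matrix.mul_assoc]
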